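/- For every pure push expression e₁ and every pure pop expression ē₂, there exist a pure pop expression d̄ and a pure push expression d such that the equation e₁ · ē₂ = d̄ + d is derivable in the equational theory of Kleene algebra over regular expressions on Σ augmented with the axioms push a · pop a = 1 for all a ∈ V, and push a · pop b = 0 for all a, b ∈ V with a ≠ b. -/

import Mathlib

/-- Push-pop StacKAT expressions: regular-expression terms over push/pop of values in `V`. -/
inductive Exp (V : Type) : Type
  | zero : Exp V
  | one : Exp V
  | plus : Exp V → Exp V → Exp V
  | seq : Exp V → Exp V → Exp V
  | star : Exp V → Exp V
  | push : V → Exp V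
  | pop : V → Exp V

/-- `n`-fold relational composition of a relation. -/
def relPow {α : Type*} (r : α → α → Prop) : ℕ → α → α → Prop
  | 0 => Eq
  | n + 1 => Relation.Comp r (relPow r n)

/-- The relational semantics of a push-pop StacKAT expression, as a binary relation on stacks. -/
def denote {V : Type} : Exp V → List V → List V → Prop
  | Exp.zero => fun _ _ => False
  | Exp.one => Eq
  | Exp.plus e f => fun s t => denote e s t ∨ denote f s t
  | Exp.seq e f => Relation.Comp (denote e) (denote f)
  | Exp.star e => fun s t => ∃ n, relPow (denote e) n s t
  | Exp.push v => fun s t => t = v :: s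
  | Exp.pop v => fun s t => s = v :: t

/-- Derivability in the equational theory of Kleene algebra over push-pop regular
expressions, augmented with the axioms `push a · pop a = 1` and
`push a · pop b = 0` for `a ≠ b`. Inequality `e ≤ f` is encoded as `e + f = f`. -/
inductive KAeq {V : Type} : Exp V → Exp V → Prop
  | refl (e : Exp V) : KAeq e e
  | symm {e f : Exp V} : KAeq e f → KAeq f e
  | trans {e f g : Exp V} : KAeq e f → KAeq f g → KAeq e g
  | plus_congr {e₁ e₂ f₁ f₂ : Exp V} :
      KAeq e₁ e₂ → KAeq f₁ f₂ → KAeq (e₁.plus f₁) (e₂.plus f₂)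
  | seq_congr {e₁ e₂ f₁ f₂ : Exp V} :
      KAeq e₁ e₂ → KAeq f₁ f₂ → KAeq (e₁.seq f₁) (e₂.seq f₂)
  | star_congr {e f : Exp V} : KAeq e f → KAeq e.star f.star
  | plus_assoc (e f g : Exp V) : KAeq ((e.plus f).plus g) (e.plus (f.plus g))
  | plus_comm (e f : Exp V) : KAeq (e.plus f) (f.plus e)
  | plus_idem (e : Exp V) : KAeq (e.plus e) e
  | plus_zero (e : Exp V) : KAeq (e.plus Exp.zero) e
  | seq_assoc (e f g : Exp V) : KAeq ((e.seq f).seq g) (e.seq (f.seq g))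
  | one_seq (e : Exp V) : KAeq (Exp.one.seq e) e
  | seq_one (e : Exp V) : KAeq (e.seq Exp.one) e
  | zero_seq (e : Exp V) : KAeq (Exp.zero.seq e) Exp.zero
  | seq_zero (e : Exp V) : KAeq (e.seq Exp.zero) Exp.zero
  | left_distrib (e f g : Exp V) :
      KAeq (e.seq (f.plus g)) ((e.seq f).plus (e.seq g))
  | right_distrib (e f g : Exp V) :
      KAeq ((e.plus f).seq g) ((e.seq g).plus (f.seq g))
  /-- `1 + e·e* ≤ e*` -/
  | star_unfold_left (e : Exp V) :
      KAeq ((Exp.one.plus (e.seq e.star)).plus e.star) e.star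
  /-- `1 + e*·e ≤ e*` -/
  | star_unfold_right (e : Exp V) :
      KAeq ((Exp.one.plus (e.star.seq e)).plus e.star) e.star
  /-- `b + e·x ≤ x ⟹ e*·b ≤ x` -/
  | star_fix_left {e b x : Exp V} :
      KAeq ((b.plus (e.seq x)).plus x) x → KAeq ((e.star.seq b).plus x) x
  /-- `b + x·e ≤ x ⟹ b·e* ≤ x` -/
  | star_fix_right {e b x : Exp V} :
      KAeq ((b.plus (x.seq e)).plus x) x → KAeq ((b.seq e.star).plus x) x
  /-- `push a · pop a = 1` -/
  | push_pop (a : V) : KAeq ((Exp.push a).seq (Exp.pop a)) Exp.one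
  /-- `push a · pop b = 0` for `a ≠ b` -/
  | push_pop_ne {a b : V} : a ≠ b → KAeq ((Exp.push a).seq (Exp.pop b)) Exp.zero

/-- A pure push expression: all its letters are push symbols (`0` and `1` count). -/
inductive PurePush {V : Type} : Exp V → Prop
  | zero : PurePush Exp.zero
  | one : PurePush Exp.one
  | push (v : V) : PurePush (Exp.push v)
  | plus {e f : Exp V} : PurePush e → PurePush f → PurePush (e.plus f)
  | seq {e f : Exp V} : PurePush e → PurePush f → PurePush (e.seq f)
  | star {e : Exp V} : PurePush e → PurePush e.star

/-- A pure pop expression: all its letters are pop symbols (`0` and `1` count). -/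
inductive PurePop {V : Type} : Exp V → Prop
  | zero : PurePop Exp.zero
  | one : PurePop Exp.one
  | pop (v : V) : PurePop (Exp.pop v)
  | plus {e f : Exp V} : PurePop e → PurePop f → PurePop (e.plus f)
  | seq {e f : Exp V} : PurePop e → PurePop f → PurePop (e.seq f)
  | star {e : Exp V} : PurePop e → PurePop e.star

/-!
Work in the Kleene algebra `PushPopKA V` of expressions modulo derivability. Every pure pop
expression lies in a finitely generated additive submonoid `M` of pure pop elements that is
closed under derivatives by pop letters: each `x ∈ M` is `c + ∑ b, pop b * y b` with
`c ∈ {0, 1}` and `y b ∈ M`, so `M` is in effect an automaton. As `push v * pop b` is `1` or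
`0`, `push v * x ∈ M + pushes` for `x ∈ M`, and this extends to every pure push `e` by
induction on `e`. In the star case `a∗ * x = m + a∗ * d`, where `m` is the largest element of
the finite set `M` below `a∗ * x` and `d` is pure push.
-/

open Computability

section IdemSemiring

variable {K : Type*} [IdemSemiring K]

theorem AddSubmonoid.FG.finite_coe {M : AddSubmonoid K} (hM : M.FG) : (M : Set K).Finite := by
  classical
  obtain ⟨s, rfl⟩ := hM
  refine (s.powerset.finite_toSet.image fun t => t.sup id).subset fun x hx => ?_
  induction hx using AddSubmonoid.closure_induction with
  | mem x hx => exact ⟨{x}, by simpa using hx, by simp⟩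
  | zero => exact ⟨∅, by simp, by simp [bot_eq_zero]⟩
  | add x y _ _ hx hy =>
    obtain ⟨t, ht, rfl⟩ := hx
    obtain ⟨u, hu, rfl⟩ := hy
    exact ⟨t ∪ u, by simp_all, by simp [Finset.sup_union, add_eq_sup]⟩

theorem le_one_of_mem_closure_one {c : K} (hc : c ∈ AddSubmonoid.closure {1}) : c ≤ 1 := by
  induction hc using AddSubmonoid.closure_induction with
  | mem x hx => exact (Set.mem_singleton_iff.1 hx).le
  | zero => exact zero_le
  | add x y _ _ hx hy => exact add_le hx hy

end IdemSemiring

theorem kstar_add_of_le_one {K : Type*} [KleeneAlgebra K] {a c : K} (hc : c ≤ 1) :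
    (c + a)∗ = a∗ := by
  refine le_antisymm (kstar_le_of_mul_le_right one_le_kstar ?_) (kstar_mono le_add_self)
  rw [add_mul]
  exact add_le (by grw [hc, one_mul]) mul_kstar_le_kstar

namespace AddSubmonoid

section Semiring

variable {K : Type*} [Semiring K] {M N : AddSubmonoid K} {a b : K}

theorem add_mul_mem_sup (ha : ∀ x ∈ M, a * x ∈ M ⊔ N) (hb : ∀ x ∈ M, b * x ∈ M ⊔ N) :
    ∀ x ∈ M, (a + b) * x ∈ M ⊔ N := fun x hx => by
  rw [add_mul]
  exact add_mem (ha x hx) (hb x hx)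

theorem mul_mul_mem_sup (hN : ∀ y ∈ N, a * y ∈ N) (ha : ∀ x ∈ M, a * x ∈ M ⊔ N)
    (hb : ∀ x ∈ M, b * x ∈ M ⊔ N) : ∀ x ∈ M, (a * b) * x ∈ M ⊔ N := fun x hx => by
  obtain ⟨m, hm, d, hd, hmd⟩ := mem_sup.1 (hb x hx)
  rw [mul_assoc, ← hmd, mul_add]
  exact add_mem (ha m hm) (mem_sup_right (hN d hd))

end Semiring

/-- With `m` the largest element of `M` below `a∗ x`, write `a m = m' + d`; then `m' ≤ m`,
and `a∗ x = m + a∗ d` by star induction. -/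
theorem kstar_mul_mem_sup {K : Type*} [KleeneAlgebra K] {M N : AddSubmonoid K} {a : K}
    (hM : (M : Set K).Finite) (hN : ∀ y ∈ N, a∗ * y ∈ N) (ha : ∀ x ∈ M, a * x ∈ M ⊔ N) :
    ∀ x ∈ M, a∗ * x ∈ M ⊔ N := by
  classical
  intro x hx
  set below := hM.toFinset.filter (· ≤ a∗ * x)
  have mem_below {y} (hy : y ∈ M) (hle : y ≤ a∗ * x) : y ∈ below :=
    Finset.mem_filter.2 ⟨hM.mem_toFinset.2 hy, hle⟩
  set m := below.sup id
  have hm : m ∈ M := Finset.sup_induction (p := (· ∈ M)) (by simp [bot_eq_zero, M.zero_mem])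
    (fun y hy z hz => by simpa [← add_eq_sup] using M.add_mem hy hz)
    (fun y hy => hM.mem_toFinset.1 (Finset.mem_filter.1 hy).1)
  have hm_le : m ≤ a∗ * x := Finset.sup_le fun y hy => (Finset.mem_filter.1 hy).2
  have hx_le : x ≤ m :=
    Finset.le_sup (f := id) (mem_below hx (le_mul_of_one_le_left' one_le_kstar))
  obtain ⟨m', hm', d, hd, hmd⟩ := mem_sup.1 (ha m hm)
  have ham_le : a * m ≤ a∗ * x := by grw [hm_le, ← mul_assoc, mul_kstar_le_kstar]
  have hm'_le : m' ≤ m :=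
    Finset.le_sup (f := id) (mem_below hm' (by grw [← ham_le, ← hmd]; exact le_self_add))
  have hd_le : d ≤ a * m := by rw [← hmd]; exact le_add_self
  have key : a∗ * x = m + a∗ * d := by
    refine le_antisymm (kstar_mul_le (hx_le.trans le_self_add) ?_) (add_le hm_le ?_)
    · calc a * (m + a∗ * d) = m' + (d + a * a∗ * d) := by
            rw [mul_add, ← hmd, add_assoc, mul_assoc]
        _ ≤ m + a∗ * d := add_le_add hm'_le
          (add_le (le_mul_of_one_le_left' one_le_kstar) (by grw [mul_kstar_le_kstar]))
    · calc a∗ * d ≤ a∗ * a * m := by grw [hd_le, mul_assoc]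
        _ ≤ a∗ * (a∗ * x) := by grw [kstar_mul_le_kstar, hm_le]
        _ = a∗ * x := by rw [← mul_assoc, kstar_mul_kstar]
  rw [key]
  exact add_mem (mem_sup_left hm) (mem_sup_right (hN d hd))

end AddSubmonoid

def PushPopKA (V : Type) : Type :=
  Quotient (⟨KAeq, ⟨KAeq.refl, KAeq.symm, KAeq.trans⟩⟩ : Setoid (Exp V))

namespace PushPopKA

variable {V : Type}

def mk : Exp V → PushPopKA V := Quot.mk _

theorem mk_eq_mk {e f : Exp V} : mk e = mk f ↔ KAeq e f := Quotient.eq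

instance : Zero (PushPopKA V) := ⟨mk .zero⟩
instance : One (PushPopKA V) := ⟨mk .one⟩
instance : Add (PushPopKA V) := ⟨Quotient.map₂ Exp.plus fun _ _ h _ _ h' => h.plus_congr h'⟩
instance : Mul (PushPopKA V) := ⟨Quotient.map₂ Exp.seq fun _ _ h _ _ h' => h.seq_congr h'⟩
instance : KStar (PushPopKA V) := ⟨Quotient.map Exp.star fun _ _ h => h.star_congr⟩

theorem mk_zero : mk (.zero : Exp V) = 0 := rfl
theorem mk_one : mk (.one : Exp V) = 1 := rfl

instance : Semiring (PushPopKA V) where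
  nsmul := nsmulRec
  npow := npowRec
  add_assoc := by rintro ⟨e⟩ ⟨f⟩ ⟨g⟩; exact mk_eq_mk.2 (.plus_assoc e f g)
  zero_add := by rintro ⟨e⟩; exact mk_eq_mk.2 ((KAeq.plus_comm _ e).trans (.plus_zero e))
  add_zero := by rintro ⟨e⟩; exact mk_eq_mk.2 (.plus_zero e)
  add_comm := by rintro ⟨e⟩ ⟨f⟩; exact mk_eq_mk.2 (.plus_comm e f)
  mul_assoc := by rintro ⟨e⟩ ⟨f⟩ ⟨g⟩; exact mk_eq_mk.2 (.seq_assoc e f g)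
  one_mul := by rintro ⟨e⟩; exact mk_eq_mk.2 (.one_seq e)
  mul_one := by rintro ⟨e⟩; exact mk_eq_mk.2 (.seq_one e)
  zero_mul := by rintro ⟨e⟩; exact mk_eq_mk.2 (.zero_seq e)
  mul_zero := by rintro ⟨e⟩; exact mk_eq_mk.2 (.seq_zero e)
  left_distrib := by rintro ⟨e⟩ ⟨f⟩ ⟨g⟩; exact mk_eq_mk.2 (.left_distrib e f g)
  right_distrib := by rintro ⟨e⟩ ⟨f⟩ ⟨g⟩; exact mk_eq_mk.2 (.right_distrib e f g)

instance : IdemSemiring (PushPopKA V) :=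
  IdemSemiring.ofSemiring <| by rintro ⟨e⟩; exact mk_eq_mk.2 (.plus_idem e)

theorem mk_le_mk {e f : Exp V} : mk e ≤ mk f ↔ KAeq (e.plus f) f := mk_eq_mk

instance : KleeneAlgebra (PushPopKA V) :=
  have unfold_left (e : Exp V) : 1 + mk e * (mk e)∗ ≤ (mk e)∗ :=
    mk_le_mk.2 (.star_unfold_left e)
  have unfold_right (e : Exp V) : 1 + (mk e)∗ * mk e ≤ (mk e)∗ :=
    mk_le_mk.2 (.star_unfold_right e)
  { one_le_kstar := by rintro ⟨e⟩; exact le_self_add.trans (unfold_left e)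
    mul_kstar_le_kstar := by rintro ⟨e⟩; exact le_add_self.trans (unfold_left e)
    kstar_mul_le_kstar := by rintro ⟨e⟩; exact le_add_self.trans (unfold_right e)
    kstar_mul_le_self := by
      rintro ⟨e⟩ ⟨b⟩ h
      exact mk_le_mk.2 (.star_fix_left (mk_le_mk.1 (add_le (le_refl (mk b)) h)))
    mul_kstar_le_self := by
      rintro ⟨e⟩ ⟨b⟩ h
      exact mk_le_mk.2 (.star_fix_right (mk_le_mk.1 (add_le (le_refl (mk b)) h))) }

theorem mk_push_mul_mk_pop (a : V) : mk (.push a) * mk (.pop a) = 1 :=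
  mk_eq_mk.2 (.push_pop a)

theorem mk_push_mul_mk_pop_of_ne {a b : V} (h : a ≠ b) : mk (.push a) * mk (.pop b) = 0 :=
  mk_eq_mk.2 (.push_pop_ne h)

def pushes : Subsemiring (PushPopKA V) where
  carrier := {x | ∃ e, PurePush e ∧ mk e = x}
  zero_mem' := ⟨_, .zero, rfl⟩
  one_mem' := ⟨_, .one, rfl⟩
  add_mem' := by rintro _ _ ⟨e, he, rfl⟩ ⟨f, hf, rfl⟩; exact ⟨_, he.plus hf, rfl⟩
  mul_mem' := by rintro _ _ ⟨e, he, rfl⟩ ⟨f, hf, rfl⟩; exact ⟨_, he.seq hf, rfl⟩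

def pops : Subsemiring (PushPopKA V) where
  carrier := {x | ∃ e, PurePop e ∧ mk e = x}
  zero_mem' := ⟨_, .zero, rfl⟩
  one_mem' := ⟨_, .one, rfl⟩
  add_mem' := by rintro _ _ ⟨e, he, rfl⟩ ⟨f, hf, rfl⟩; exact ⟨_, he.plus hf, rfl⟩
  mul_mem' := by rintro _ _ ⟨e, he, rfl⟩ ⟨f, hf, rfl⟩; exact ⟨_, he.seq hf, rfl⟩

theorem mk_mem_pushes {e : Exp V} (he : PurePush e) : mk e ∈ pushes := ⟨e, he, rfl⟩

theorem mk_mem_pops {e : Exp V} (he : PurePop e) : mk e ∈ pops := ⟨e, he, rfl⟩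

theorem kstar_mem_pushes {x : PushPopKA V} : x ∈ pushes → x∗ ∈ pushes := by
  rintro ⟨e, he, rfl⟩; exact ⟨_, he.star, rfl⟩

theorem kstar_mem_pops {x : PushPopKA V} : x ∈ pops → x∗ ∈ pops := by
  rintro ⟨e, he, rfl⟩; exact ⟨_, he.star, rfl⟩

open AddSubmonoid

/-- The elements `c + ∑ b, pop b * y b` with `c ∈ {0, 1}` and `y b ∈ M`. -/
def popExpand (M : AddSubmonoid (PushPopKA V)) : AddSubmonoid (PushPopKA V) :=
  closure {1} ⊔ ⨆ b, M.map (AddMonoidHom.mulLeft (mk (.pop b)))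

theorem popExpand_mono : Monotone (popExpand (V := V)) :=
  fun _ _ h => sup_le_sup_left (iSup_mono fun _ => monotone_map h) _

theorem one_mem_popExpand (M : AddSubmonoid (PushPopKA V)) : 1 ∈ popExpand M :=
  mem_sup_left (subset_closure rfl)

theorem pop_mul_mem_popExpand {M : AddSubmonoid (PushPopKA V)} {y : PushPopKA V} (hy : y ∈ M)
    (b : V) : mk (.pop b) * y ∈ popExpand M :=
  mem_sup_right (mem_iSup_of_mem b (mem_map_of_mem _ hy))

theorem push_mul_mem_sup {M : AddSubmonoid (PushPopKA V)} (hM : M ≤ popExpand M) (v : V) :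
    ∀ x ∈ M, mk (.push v) * x ∈ M ⊔ pushes.toAddSubmonoid := by
  suffices popExpand M ≤
      (M ⊔ pushes.toAddSubmonoid).comap (AddMonoidHom.mulLeft (mk (.push v))) from
    fun x hx => this (hM hx)
  refine sup_le (closure_le.2 ?_) (iSup_le fun b => map_le_iff_le_comap.2 fun y hy => ?_)
  · rintro _ rfl
    exact mem_sup_right (by simpa using mk_mem_pushes (.push v))
  · change mk (.push v) * (mk (.pop b) * y) ∈ M ⊔ pushes.toAddSubmonoid
    rw [← mul_assoc]
    obtain rfl | h := eq_or_ne v b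
    · rw [mk_push_mul_mk_pop, one_mul]
      exact mem_sup_left hy
    · rw [mk_push_mul_mk_pop_of_ne h, zero_mul]
      exact zero_mem _

structure IsPopAutomaton (M : AddSubmonoid (PushPopKA V)) : Prop where
  intro ::
  fg : M.FG
  le_pops : M ≤ pops.toAddSubmonoid
  le_popExpand : M ≤ popExpand M

namespace IsPopAutomaton

theorem bot : IsPopAutomaton (⊥ : AddSubmonoid (PushPopKA V)) :=
  ⟨.bot, bot_le, bot_le⟩

theorem closure_one : IsPopAutomaton (AddSubmonoid.closure {1} : AddSubmonoid (PushPopKA V)) :=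
  ⟨⟨{1}, by simp⟩, closure_le.2 (by simp), le_sup_left⟩

theorem closure_one_pop (c : V) :
    IsPopAutomaton (AddSubmonoid.closure {1, mk (.pop c)} : AddSubmonoid (PushPopKA V)) := by
  refine ⟨(fg_iff _).2 ⟨_, rfl, (Set.finite_singleton _).insert 1⟩, closure_le.2 ?_,
    closure_le.2 ?_⟩
  · exact Set.insert_subset pops.one_mem (by simpa using mk_mem_pops (.pop c))
  · refine Set.insert_subset (one_mem_popExpand _) (Set.singleton_subset_iff.2 ?_)
    simpa using pop_mul_mem_popExpand (subset_closure (Set.mem_insert 1 _)) c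

theorem sup {M N : AddSubmonoid (PushPopKA V)} (hM : IsPopAutomaton M)
    (hN : IsPopAutomaton N) : IsPopAutomaton (M ⊔ N) :=
  ⟨hM.fg.sup hN.fg, sup_le hM.le_pops hN.le_pops,
    sup_le (hM.le_popExpand.trans (popExpand_mono le_sup_left))
      (hN.le_popExpand.trans (popExpand_mono le_sup_right))⟩

theorem map_mulRight_sup {M N : AddSubmonoid (PushPopKA V)} (hM : IsPopAutomaton M)
    (hN : IsPopAutomaton N) {g : PushPopKA V} (hg : g ∈ N) :
    IsPopAutomaton (M.map (AddMonoidHom.mulRight g) ⊔ N) := by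
  set L := M.map (AddMonoidHom.mulRight g) ⊔ N
  have hNL : popExpand N ≤ popExpand L := popExpand_mono le_sup_right
  have expand_mul : popExpand M ≤ (popExpand L).comap (AddMonoidHom.mulRight g) := by
    refine sup_le (closure_le.2 ?_) (iSup_le fun b => map_le_iff_le_comap.2 fun y hy => ?_)
    · rintro _ rfl
      simpa using hNL (hN.le_popExpand hg)
    · change mk (.pop b) * y * g ∈ popExpand L
      rw [mul_assoc]
      exact pop_mul_mem_popExpand (mem_sup_left (mem_map_of_mem _ hy)) b
  refine ⟨(hM.fg.map _).sup hN.fg, sup_le ?_ hN.le_pops,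
    sup_le (map_le_iff_le_comap.2 (hM.le_popExpand.trans expand_mul))
      (hN.le_popExpand.trans hNL)⟩
  exact map_le_iff_le_comap.2 fun y hy => pops.mul_mem (hM.le_pops hy) (hN.le_pops hg)

/-- Writing `f = c + f₀` with `c ≤ 1` and `f₀` a sum of terms `pop b * y`, the expansion of
`f∗` is `f∗ = f₀∗ = 1 + f₀ * f∗`. -/
theorem map_mulRight_kstar {M : AddSubmonoid (PushPopKA V)} (hM : IsPopAutomaton M)
    {f : PushPopKA V} (hf : f ∈ M) :
    IsPopAutomaton ((AddSubmonoid.closure {1} ⊔ M).map (AddMonoidHom.mulRight f∗)) := by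
  set L := (AddSubmonoid.closure {1} ⊔ M).map (AddMonoidHom.mulRight f∗)
  have pops_mul : ⨆ b, M.map (AddMonoidHom.mulLeft (mk (.pop b))) ≤
      (popExpand L).comap (AddMonoidHom.mulRight f∗) := by
    refine iSup_le fun b => map_le_iff_le_comap.2 fun y hy => ?_
    change mk (.pop b) * y * f∗ ∈ popExpand L
    rw [mul_assoc]
    exact pop_mul_mem_popExpand (mem_map_of_mem _ (mem_sup_right hy)) b
  have kstar_mem : f∗ ∈ popExpand L := by
    obtain ⟨c, hc, f₀, hf₀, rfl⟩ := mem_sup.1 (hM.le_popExpand hf)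
    have hstar : (c + f₀)∗ = f₀∗ := kstar_add_of_le_one (le_one_of_mem_closure_one hc)
    have hf₀_mul : f₀ * (c + f₀)∗ ∈ popExpand L := pops_mul hf₀
    rw [hstar] at hf₀_mul ⊢
    rw [← one_add_mul_kstar]
    exact add_mem (one_mem_popExpand L) hf₀_mul
  have le_expand : AddSubmonoid.closure {1} ⊔ M ≤
      (popExpand L).comap (AddMonoidHom.mulRight f∗) :=
    (sup_le le_sup_left hM.le_popExpand).trans <|
      sup_le (closure_le.2 (by simpa using kstar_mem)) pops_mul
  have hN := closure_one.sup hM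
  refine ⟨hN.fg.map _, map_le_iff_le_comap.2 fun y hy => ?_, map_le_iff_le_comap.2 le_expand⟩
  exact pops.mul_mem (hN.le_pops hy) (kstar_mem_pops (hM.le_pops hf))

end IsPopAutomaton

theorem exists_isPopAutomaton {f : Exp V} (hf : PurePop f) :
    ∃ M : AddSubmonoid (PushPopKA V), IsPopAutomaton M ∧ mk f ∈ M := by
  induction hf with
  | zero => exact ⟨⊥, .bot, zero_mem _⟩
  | one => exact ⟨_, .closure_one, subset_closure rfl⟩
  | pop c => exact ⟨_, .closure_one_pop c, subset_closure (Set.mem_insert_of_mem _ rfl)⟩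
  | plus _ _ ihe ihf =>
    obtain ⟨M, hM, he⟩ := ihe
    obtain ⟨N, hN, hf⟩ := ihf
    exact ⟨_, hM.sup hN, add_mem (mem_sup_left he) (mem_sup_right hf)⟩
  | seq _ _ ihe ihf =>
    obtain ⟨M, hM, he⟩ := ihe
    obtain ⟨N, hN, hf⟩ := ihf
    exact ⟨_, hM.map_mulRight_sup hN hf, mem_sup_left (mem_map_of_mem _ he)⟩
  | star _ ihe =>
    obtain ⟨M, hM, he⟩ := ihe
    exact ⟨_, hM.map_mulRight_kstar he,
      mem_map.2 ⟨1, mem_sup_left (subset_closure rfl), one_mul _⟩⟩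

theorem mul_mem_sup_pushes {e : Exp V} (he : PurePush e) {M : AddSubmonoid (PushPopKA V)}
    (hM : IsPopAutomaton M) : ∀ x ∈ M, mk e * x ∈ M ⊔ pushes.toAddSubmonoid := by
  induction he with
  | zero => exact fun x _ => by rw [mk_zero, zero_mul]; exact zero_mem _
  | one => exact fun x hx => by rw [mk_one, one_mul]; exact mem_sup_left hx
  | push v => exact push_mul_mem_sup hM.le_popExpand v
  | plus _ _ ihe ihf => exact add_mul_mem_sup ihe ihf
  | seq he _ ihe ihf =>
    exact mul_mul_mem_sup (fun y hy => pushes.mul_mem (mk_mem_pushes he) hy) ihe ihf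
  | star he ihe =>
    exact kstar_mul_mem_sup hM.fg.finite_coe
      (fun y hy => pushes.mul_mem (kstar_mem_pushes (mk_mem_pushes he)) hy) ihe

end PushPopKA

theorem stmt17_general {V : Type} (e₁ ebar₂ : Exp V)
    (h₁ : PurePush e₁) (h₂ : PurePop ebar₂) :
    ∃ dbar d : Exp V, PurePop dbar ∧ PurePush d ∧ KAeq (e₁.seq ebar₂) (dbar.plus d) := by
  obtain ⟨M, hM, hf⟩ := PushPopKA.exists_isPopAutomaton h₂
  obtain ⟨_, hx, _, ⟨d, hd, rfl⟩, hsum⟩ :=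
    AddSubmonoid.mem_sup.1 (PushPopKA.mul_mem_sup_pushes h₁ hM _ hf)
  obtain ⟨dbar, hdbar, rfl⟩ := hM.le_pops hx
  exact ⟨dbar, d, hdbar, hd, PushPopKA.mk_eq_mk.1 hsum.symm⟩

/-- For every pure push `e₁` and pure pop `ē₂`, there are a pure pop `d̄` and a pure
push `d` with `e₁ · ē₂ = d̄ + d` derivable in KA plus the push-pop axioms. -/
theorem stmt17 {V : Type} [Fintype V] [Nonempty V] (e₁ ebar₂ : Exp V)
    (h₁ : PurePush e₁) (h₂ : PurePop ebar₂) :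
    ∃ dbar d : Exp V, PurePop dbar ∧ PurePush d ∧ KAeq (e₁.seq ebar₂) (dbar.plus d) :=
  stmt17_general e₁ ebar₂ h₁ h₂
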